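/- For the Schnakenberg model with Jacobian J(x) = [[-1/α², -2αβ(x)],[1/α², α(2β(x)-1)]] and diffusion D = diag(1,d), α > 0, 0 < d < 1, the local Turing conditions tr(J(x)) < 0, det(J(x)) > 0, tr(D⁻¹J(x)) > 0, tr(D⁻¹J(x))² - 4 det(D⁻¹J(x)) > 0 hold at a point x if and only if (1/2)(1 + d/α³) + sqrt(d/α³) < β(x) < (1/2)(1 + 1/α³). -/

import Mathlib

open Matrix

/-- The diffusion matrix D = diag(1, d). -/
noncomputable def Dmat (d : ℝ) : Matrix (Fin 2) (Fin 2) ℝ := !![1, 0; 0, d]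

/-- The Schnakenberg Jacobian at the heterogeneous steady state. -/
noncomputable def SchnakJ (α b : ℝ) : Matrix (Fin 2) (Fin 2) ℝ :=
  !![-1 / α ^ 2, -2 * α * b; 1 / α ^ 2, α * (2 * b - 1)]

/-! Each Turing condition is an inequality for `b` with a positive prefactor: the trace
conditions bound `b` by `(1 + 1/α³)/2` from above and by `c = (1 + d/α³)/2` from below, and the
discriminant is a positive multiple of `(b - c)² - d/α³`. Of the two branches `b < c - √(d/α³)`
and `b > c + √(d/α³)` of the discriminant condition only the second one satisfies `c < b`. -/

theorem inv_Dmat {d : ℝ} (hd : d ≠ 0) : (Dmat d)⁻¹ = !![1, 0; 0, d⁻¹] := by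
  rw [Matrix.inv_eq_right_inv]
  rw [Dmat, Matrix.mul_fin_two, mul_inv_cancel₀ hd, Matrix.one_fin_two]
  simp

theorem trace_SchnakJ (α b : ℝ) : (SchnakJ α b).trace = -1 / α ^ 2 + α * (2 * b - 1) := by
  rw [SchnakJ, Matrix.trace_fin_two_of]

theorem det_SchnakJ {α : ℝ} (hα : α ≠ 0) (b : ℝ) : (SchnakJ α b).det = 1 / α := by
  rw [SchnakJ, Matrix.det_fin_two_of]
  field_simp
  ring

theorem trace_inv_Dmat_mul_SchnakJ {d : ℝ} (hd : d ≠ 0) (α b : ℝ) :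
    ((Dmat d)⁻¹ * SchnakJ α b).trace = -1 / α ^ 2 + α * (2 * b - 1) / d := by
  rw [inv_Dmat hd, SchnakJ, Matrix.mul_fin_two, Matrix.trace_fin_two_of]
  ring

theorem det_inv_Dmat_mul_SchnakJ {α d : ℝ} (hα : α ≠ 0) (hd : d ≠ 0) (b : ℝ) :
    ((Dmat d)⁻¹ * SchnakJ α b).det = 1 / (α * d) := by
  rw [Matrix.det_mul, det_SchnakJ hα, inv_Dmat hd, Matrix.det_fin_two_of]
  field_simp
  ring

theorem trace_SchnakJ_neg_iff {α : ℝ} (hα : 0 < α) (b : ℝ) :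
    (SchnakJ α b).trace < 0 ↔ b < (1 / 2) * (1 + 1 / α ^ 3) := by
  have h : -(SchnakJ α b).trace = 2 * α * ((1 / 2) * (1 + 1 / α ^ 3) - b) := by
    rw [trace_SchnakJ]
    field_simp
    ring
  rw [← neg_pos, h, mul_pos_iff_of_pos_left (by positivity), sub_pos]

theorem trace_inv_Dmat_mul_SchnakJ_pos_iff {α d : ℝ} (hα : 0 < α) (hd : 0 < d) (b : ℝ) :
    0 < ((Dmat d)⁻¹ * SchnakJ α b).trace ↔ (1 / 2) * (1 + d / α ^ 3) < b := by
  have h : ((Dmat d)⁻¹ * SchnakJ α b).trace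
      = 2 * α / d * (b - (1 / 2) * (1 + d / α ^ 3)) := by
    rw [trace_inv_Dmat_mul_SchnakJ hd.ne']
    field_simp
    ring
  rw [h, mul_pos_iff_of_pos_left (by positivity), sub_pos]

theorem discr_inv_Dmat_mul_SchnakJ_pos_iff {α d : ℝ} (hα : 0 < α) (hd : 0 < d) (b : ℝ) :
    0 < ((Dmat d)⁻¹ * SchnakJ α b).trace ^ 2 - 4 * ((Dmat d)⁻¹ * SchnakJ α b).det ↔
      d / α ^ 3 < (b - (1 / 2) * (1 + d / α ^ 3)) ^ 2 := by
  have h : ((Dmat d)⁻¹ * SchnakJ α b).trace ^ 2 - 4 * ((Dmat d)⁻¹ * SchnakJ α b).det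
      = 4 * α ^ 2 / d ^ 2 * ((b - (1 / 2) * (1 + d / α ^ 3)) ^ 2 - d / α ^ 3) := by
    rw [trace_inv_Dmat_mul_SchnakJ hd.ne', det_inv_Dmat_mul_SchnakJ hα.ne' hd.ne']
    field_simp
    ring
  rw [h, mul_pos_iff_of_pos_left (by positivity), sub_pos]

theorem lt_and_sq_lt_sq_sub_iff {b c r : ℝ} (hr : 0 ≤ r) :
    c < b ∧ r ^ 2 < (b - c) ^ 2 ↔ c + r < b := by
  constructor
  · rintro ⟨hcb, hsq⟩
    have := (pow_lt_pow_iff_left₀ hr (sub_pos.2 hcb).le two_ne_zero).1 hsq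
    linarith
  · intro h
    exact ⟨by linarith, pow_lt_pow_left₀ (by linarith) hr two_ne_zero⟩

theorem stmt15_general (α d x : ℝ) (β : ℝ → ℝ)
    (hα : 0 < α) (hd : 0 < d) :
    ((SchnakJ α (β x)).trace < 0 ∧ 0 < (SchnakJ α (β x)).det ∧
      0 < ((Dmat d)⁻¹ * SchnakJ α (β x)).trace ∧
      0 < ((Dmat d)⁻¹ * SchnakJ α (β x)).trace ^ 2
          - 4 * ((Dmat d)⁻¹ * SchnakJ α (β x)).det) ↔
    ((1 / 2) * (1 + d / α ^ 3) + Real.sqrt (d / α ^ 3) < β x ∧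
      β x < (1 / 2) * (1 + 1 / α ^ 3)) := by
  have hdet : 0 < (SchnakJ α (β x)).det := by
    rw [det_SchnakJ hα.ne']
    positivity
  have hroots := lt_and_sq_lt_sq_sub_iff (b := β x) (c := (1 / 2) * (1 + d / α ^ 3))
    (Real.sqrt_nonneg (d / α ^ 3))
  rw [Real.sq_sqrt (by positivity)] at hroots
  rw [trace_SchnakJ_neg_iff hα, trace_inv_Dmat_mul_SchnakJ_pos_iff hα hd,
    discr_inv_Dmat_mul_SchnakJ_pos_iff hα hd, ← hroots]
  tauto

theorem stmt15 (α d x : ℝ) (β : ℝ → ℝ)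
    (hα : 0 < α) (hd : 0 < d) (hd1 : d < 1) (hβ : 0 < β x) :
    ((SchnakJ α (β x)).trace < 0 ∧ 0 < (SchnakJ α (β x)).det ∧
      0 < ((Dmat d)⁻¹ * SchnakJ α (β x)).trace ∧
      0 < ((Dmat d)⁻¹ * SchnakJ α (β x)).trace ^ 2
          - 4 * ((Dmat d)⁻¹ * SchnakJ α (β x)).det) ↔
    ((1 / 2) * (1 + d / α ^ 3) + Real.sqrt (d / α ^ 3) < β x ∧
      β x < (1 / 2) * (1 + 1 / α ^ 3)) :=
  stmt15_general α d x β hα hd
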